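/- Let λ and μ be nonempty words over the alphabet {L, M, R}. If there exist words δ and ρ such that μ̄λ = δδ̄ and λμ = ρρ̄, then λ = M^{|λ|} or μ = M^{|μ|} (i.e., at least one of λ, μ consists entirely of the letter M). -/

import Mathlib

/-- The three-letter alphabet {L, M, R}. -/
inductive Letter : Type
  | L | M | R
deriving DecidableEq, Repr

/-- Complementation on letters: R̄ = L, L̄ = R, M̄ = M. -/
def Letter.bar : Letter → Letter
  | .L => .R
  | .M => .M
  | .R => .L

/-- Complement of a word (letterwise). -/
def comp (w : List Letter) : List Letter := w.map Letter.bar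

/-- k-fold concatenation of a word with itself. -/
def npow (w : List Letter) : ℕ → List Letter
  | 0 => []
  | n + 1 => w ++ npow w n

/-! In `λμ = ρρ̄` either `ρ = λb` or `λ = ρc`, which writes both `λ` and `μ` in terms of two words;
substituting into `μ̄λ = δδ̄` exhibits that word as `u v` with `|u| = |v|`, so `v = ū`, and
cancelling the common parts of `v` and `ū` leaves `λ̄ = λ` or `μ̄ = μ`. Only `M` is fixed by
complementation. -/

@[simp]
lemma Letter.bar_bar (a : Letter) : a.bar.bar = a := by
  cases a <;> rfl

lemma Letter.bar_eq_self_iff (a : Letter) : a.bar = a ↔ a = .M := by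
  cases a <;> decide

@[simp]
lemma comp_append (u v : List Letter) : comp (u ++ v) = comp u ++ comp v :=
  List.map_append

@[simp]
lemma comp_comp (w : List Letter) : comp (comp w) = w := by
  simp [comp, Function.comp_def]

@[simp]
lemma length_comp (w : List Letter) : (comp w).length = w.length :=
  List.length_map _

lemma eq_replicate_M_of_comp_eq_self {w : List Letter} (h : comp w = w) :
    w = List.replicate w.length Letter.M := by
  refine List.eq_replicate_iff.2 ⟨rfl, fun a ha => (Letter.bar_eq_self_iff a).1 ?_⟩
  exact (List.map_eq_map_iff.1 (h.trans (List.map_id w).symm)) a ha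

lemma eq_comp_of_append_eq_append_comp {u v δ : List Letter} (h : u ++ v = δ ++ comp δ)
    (hlen : u.length = v.length) : v = comp u := by
  have hδ : u.length = δ.length := by
    have := congrArg List.length h
    simp only [List.length_append, length_comp] at this
    omega
  obtain ⟨rfl, rfl⟩ := List.append_inj h hδ
  rfl

theorem stmt_14_general (lam mu : List Letter)
    (h1 : ∃ δ : List Letter, comp mu ++ lam = δ ++ comp δ)
    (h2 : ∃ ρ : List Letter, lam ++ mu = ρ ++ comp ρ) :
    lam = List.replicate lam.length Letter.M ∨
      mu = List.replicate mu.length Letter.M := by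
  obtain ⟨δ, h1⟩ := h1
  obtain ⟨ρ, h2⟩ := h2
  rcases List.append_eq_append_iff.1 h2 with ⟨b, rfl, rfl⟩ | ⟨c, rfl, hc⟩
  · left
    have hsplit : comp b ++ lam ++ (b ++ lam) = δ ++ comp δ := by simpa using h1
    have hb : b ++ lam = b ++ comp lam := by
      simpa using eq_comp_of_append_eq_append_comp hsplit (by simp)
    exact eq_replicate_M_of_comp_eq_self (List.append_cancel_left hb).symm
  · right
    have hρ : ρ = comp c ++ comp mu := by simpa using congrArg comp hc
    subst hρ
    have hsplit : comp mu ++ comp c ++ (comp mu ++ c) = δ ++ comp δ := by simpa using h1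
    have hmu : comp mu ++ c = mu ++ c := by
      simpa using eq_comp_of_append_eq_append_comp hsplit (by simp)
    exact eq_replicate_M_of_comp_eq_self (List.append_inj_left' hmu rfl)

theorem stmt_14 (lam mu : List Letter) (hlam : lam ≠ []) (hmu : mu ≠ [])
    (h1 : ∃ δ : List Letter, comp mu ++ lam = δ ++ comp δ)
    (h2 : ∃ ρ : List Letter, lam ++ mu = ρ ++ comp ρ) :
    lam = List.replicate lam.length Letter.M ∨
      mu = List.replicate mu.length Letter.M :=
  stmt_14_general lam mu h1 h2
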